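/- arXiv:2301.03775 — 7 statements merged into one kernel-verified Lean document; each statement's English description precedes it below -/
import Mathlib

section
/- Fix K, M, ρ ∈ [0,1), ξ ∈ (0,1], γ₀ > 0 and β_1,…,β_K > 0, and for real N > max(K,M) set T = N, a = M/N, b = K/N, φ = 1−b, ϖ = a·b·(1−ξ)². On the set of N for which φ·κ²·(1−a) − ϖ > 0, the map N ↦ R_k(N) is strictly increasing, the map N ↦ C̄(N) is nonincreasing, and hence the secrecy-rate lower bound N ↦ R_sec(N) = max(R_k(N) − C̄(N), 0) is monotonically nondecreasing in N. -/
/-!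
With `T = N` the factor `N` in the interference term of `R_k` cancels, so the user's SINR is
an affine function of `N` with positive slope and `R_k` increases strictly. For the
eavesdropper, dividing numerator and denominator of the SINR by `φ = 1 - K/N > 0` leaves the
constant numerator `M ξ κ β_k / S` over `κ² (1 - M/N) - (M/N) (K/(N-K)) (1-ξ)²`, which grows
with `N`; hence `C̄` is nonincreasing, and `max (R_k - C̄) 0` is nondecreasing.
-/

open Real Set

theorem MonotoneOn.max_sub_zero {α β : Type*} [Preorder α] [AddCommGroup β] [LinearOrder β]
    [IsOrderedAddMonoid β] {s : Set α} {f g : α → β} (hf : MonotoneOn f s)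
    (hg : AntitoneOn g s) : MonotoneOn (fun x => max (f x - g x) 0) s := by
  simpa only [sub_eq_add_neg] using (hf.add hg.neg).max monotoneOn_const

theorem strictMonoOn_userRate {p c e d S : ℝ} (hp : 0 < p) (hS : 0 < S) (hce : 0 ≤ c * e)
    (hd : 0 ≤ d) :
    StrictMonoOn (fun N => logb 2 (1 + (p * N / S) / (c * N * e / (N * S) + d + 1))) (Ioi 0) := by
  intro a (ha : 0 < a) b (hb : 0 < b) hab
  have hcancel : ∀ N : ℝ, N ≠ 0 → c * N * e / (N * S) = c * e / S := fun N hN => by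
    field_simp
  have hD : 0 < c * e / S + d + 1 := by positivity
  simp only [hcancel a ha.ne', hcancel b hb.ne']
  apply logb_lt_logb one_lt_two (by positivity)
  gcongr

section Eavesdropper

variable {K M ξ κ β S w N : ℝ}

theorem eavesdropperSINR_eq (hKN : K < N) (hN : 0 < N) :
    ((1 - K / N) * M * ξ * κ * β / S) /
        ((1 - K / N) * κ ^ 2 * (N / N - M / N) - M / N * (K / N) * w)
      = (M * ξ * κ * β / S) / (κ ^ 2 * (1 - M / N) - M / N * (K / (N - K)) * w) := by
  have hNK : N - K ≠ 0 := sub_ne_zero.2 hKN.ne'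
  rw [div_self hN.ne']
  field_simp

theorem monotoneOn_eavesdropperDenom (hK : 0 ≤ K) (hM : 0 ≤ M) (hw : 0 ≤ w) :
    MonotoneOn (fun N => κ ^ 2 * (1 - M / N) - M / N * (K / (N - K)) * w) (Ioi K) := by
  intro a (ha : K < a) b (hb : K < b) hab
  have ha0 : 0 < a := hK.trans_lt ha
  have haK : 0 < a - K := sub_pos.2 ha
  dsimp only
  gcongr

theorem eavesdropperDenom_pos (hKN : K < N) (hN : 0 < N)
    (hD : 0 < (1 - K / N) * κ ^ 2 * (1 - M / N) - M / N * (K / N) * w) :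
    0 < κ ^ 2 * (1 - M / N) - M / N * (K / (N - K)) * w := by
  have hφ : 0 < 1 - K / N := by rwa [sub_pos, div_lt_one hN]
  have hNK : N - K ≠ 0 := sub_ne_zero.2 hKN.ne'
  have hfactor : (1 - K / N) * κ ^ 2 * (1 - M / N) - M / N * (K / N) * w
      = (1 - K / N) * (κ ^ 2 * (1 - M / N) - M / N * (K / (N - K)) * w) := by
    field_simp
  exact pos_of_mul_pos_right (hfactor ▸ hD) hφ.le

theorem antitoneOn_eavesdropperRate (hK : 0 ≤ K) (hM : 0 ≤ M) (hξ : 0 ≤ ξ) (hκ : 0 ≤ κ)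
    (hβ : 0 ≤ β) (hS : 0 ≤ S) (hw : 0 ≤ w) :
    AntitoneOn
      (fun N => logb 2 (1 + ((1 - K / N) * M * ξ * κ * β / S) /
        ((1 - K / N) * κ ^ 2 * (N / N - M / N) - M / N * (K / N) * w)))
      {N | max K M < N ∧ 0 < (1 - K / N) * κ ^ 2 * (1 - M / N) - M / N * (K / N) * w} := by
  intro a ⟨ha, hDa⟩ b ⟨hb, hDb⟩ hab
  have hKa : K < a := (le_max_left K M).trans_lt ha
  have hKb : K < b := (le_max_left K M).trans_lt hb
  have ha0 : 0 < a := hK.trans_lt hKa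
  have hb0 : 0 < b := hK.trans_lt hKb
  have hEa := eavesdropperDenom_pos hKa ha0 hDa
  have hEb := eavesdropperDenom_pos hKb hb0 hDb
  have hE := monotoneOn_eavesdropperDenom (κ := κ) hK hM hw hKa hKb hab
  have hA : 0 ≤ M * ξ * κ * β / S := by positivity
  dsimp only
  rw [eavesdropperSINR_eq hKa ha0, eavesdropperSINR_eq hKb hb0]
  apply logb_le_logb_of_le one_lt_two (by positivity)
  exact (add_le_add_iff_left 1).2 (div_le_div_of_nonneg_left hA hEa hE)

end Eavesdropper

theorem stmt_4_general (K : ℕ) (β : Fin K → ℝ) (hβ : ∀ i, 0 < β i) (k : Fin K)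
    (M : ℝ) (hM : 0 < M)
    (ρ ξ γ₀ : ℝ) (hρ : ρ ∈ Set.Ico (0 : ℝ) 1) (hξ : ξ ∈ Set.Ioc (0 : ℝ) 1) (hγ₀ : 0 < γ₀)
    (S ρ' κ : ℝ) (hS : S = ∑ i, β i) (hρ' : ρ' = ρ / (1 - ρ)) (hκ : κ = 1 - ξ + ρ')
    (Rk Cbar : ℝ → ℝ)
    (hRk : ∀ N : ℝ, Rk N = Real.logb 2 (1 +
      ((1 - ρ) * (β k) ^ 2 * γ₀ * ξ * N / S) /
        ((1 - ρ) * ξ * γ₀ * (β k) * N * (∑ j ∈ Finset.univ.erase k, β j) / (N * S)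
          + ρ * (β k) * γ₀ + 1)))
    (hCbar : ∀ N : ℝ, Cbar N = Real.logb 2 (1 +
      ((1 - K / N) * M * ξ * κ * (β k) / S) /
        ((1 - K / N) * κ ^ 2 * (N / N - M / N) - (M / N) * (K / N) * (1 - ξ) ^ 2)))
    (goodSet : Set ℝ)
    (hgood : goodSet = {N : ℝ | max (K : ℝ) M < N ∧
      0 < (1 - K / N) * κ ^ 2 * (1 - M / N) - (M / N) * (K / N) * (1 - ξ) ^ 2}) :
    StrictMonoOn Rk goodSet ∧ AntitoneOn Cbar goodSet ∧
    MonotoneOn (fun N => max (Rk N - Cbar N) 0) goodSet := by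
  obtain ⟨hρ0, hρ1⟩ := hρ
  obtain ⟨hξ0, hξ1⟩ := hξ
  have hS0 : 0 < S := hS ▸ Finset.sum_pos (fun i _ => hβ i) ⟨k, Finset.mem_univ k⟩
  have hρ'0 : 0 ≤ ρ' := hρ' ▸ div_nonneg hρ0 (sub_nonneg.2 hρ1.le)
  have hκ0 : 0 ≤ κ := by rw [hκ]; linarith
  have hβk := hβ k
  have hρ1' : 0 < 1 - ρ := sub_pos.2 hρ1
  have hgood_pos : goodSet ⊆ Ioi 0 := hgood ▸ fun N hN =>
    hM.trans ((le_max_right _ _).trans_lt hN.1)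
  have hRk_mono : StrictMonoOn Rk goodSet := by
    rw [funext hRk]
    have hce : 0 ≤ (1 - ρ) * ξ * γ₀ * β k * ∑ j ∈ Finset.univ.erase k, β j :=
      mul_nonneg (by positivity) (Finset.sum_nonneg fun j _ => (hβ j).le)
    exact (strictMonoOn_userRate (by positivity) hS0 hce (by positivity)).mono hgood_pos
  have hCbar_anti : AntitoneOn Cbar goodSet := by
    rw [funext hCbar, hgood]
    exact antitoneOn_eavesdropperRate (Nat.cast_nonneg K) hM.le hξ0.le hκ0 hβk.le hS0.le
      (sq_nonneg (1 - ξ))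
  exact ⟨hRk_mono, hCbar_anti, hRk_mono.monotoneOn.max_sub_zero hCbar_anti⟩

/-- with `T = N`, on the set of (real) `N > max(K,M)` where
`φ·κ²·(1−a) − ϖ > 0`, the user-rate lower bound `N ↦ R_k(N)` is strictly increasing,
the eavesdropper-rate upper bound `N ↦ C̄(N)` is nonincreasing, and the secrecy-rate
lower bound `N ↦ max (R_k(N) − C̄(N)) 0` is monotonically nondecreasing in `N`. -/
theorem stmt_4 (K : ℕ) (hK : 0 < K) (β : Fin K → ℝ) (hβ : ∀ i, 0 < β i) (k : Fin K)
    (M : ℝ) (hM : 0 < M)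
    (ρ ξ γ₀ : ℝ) (hρ : ρ ∈ Set.Ico (0 : ℝ) 1) (hξ : ξ ∈ Set.Ioc (0 : ℝ) 1) (hγ₀ : 0 < γ₀)
    (S ρ' κ : ℝ) (hS : S = ∑ i, β i) (hρ' : ρ' = ρ / (1 - ρ)) (hκ : κ = 1 - ξ + ρ')
    (Rk Cbar : ℝ → ℝ)
    (hRk : ∀ N : ℝ, Rk N = Real.logb 2 (1 +
      ((1 - ρ) * (β k) ^ 2 * γ₀ * ξ * N / S) /
        ((1 - ρ) * ξ * γ₀ * (β k) * N * (∑ j ∈ Finset.univ.erase k, β j) / (N * S)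
          + ρ * (β k) * γ₀ + 1)))
    (hCbar : ∀ N : ℝ, Cbar N = Real.logb 2 (1 +
      ((1 - K / N) * M * ξ * κ * (β k) / S) /
        ((1 - K / N) * κ ^ 2 * (N / N - M / N) - (M / N) * (K / N) * (1 - ξ) ^ 2)))
    (goodSet : Set ℝ)
    (hgood : goodSet = {N : ℝ | max (K : ℝ) M < N ∧
      0 < (1 - K / N) * κ ^ 2 * (1 - M / N) - (M / N) * (K / N) * (1 - ξ) ^ 2}) :
    StrictMonoOn Rk goodSet ∧ AntitoneOn Cbar goodSet ∧
    MonotoneOn (fun N => max (Rk N - Cbar N) 0) goodSet :=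
  stmt_4_general K β hβ k M hM ρ ξ γ₀ hρ hξ hγ₀ S ρ' κ hS hρ' hκ Rk Cbar hRk hCbar goodSet hgood
end

section
/- With L₁, L₂, L₃, G₁ = M·T·(1+ρ')·β_k, G₂ = S·(N − a·T), G₃ = M·β_k·T as defined, and κ = 1 − ξ + ρ', assume ξ ∈ (0,1), κ > 0, N − a·T > 0 and all of L₁,L₂,L₃,G₁,G₂,G₃ > 0. Then F'(ξ) = 0 holds if and only if A·ξ² + B·ξ + C = 0, where A = L₁L₂G₂ − L₁L₂G₃ − G₁L₃(L₁+L₃), B = (1+ρ')·L₁L₂·(G₃ − 2G₂) − G₁L₂·(L₁ + 2L₃), and C = G₂L₁L₂(1+ρ')² − G₁L₂². Consequently, if A ≠ 0, B² − 4AC ≥ 0 and ξ* = (−B − √(B² − 4AC))/(2A) lies in (0,1), then F'(ξ*) = 0. -/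
/-- with `F'(ξ) = L₁L₂/(ln2·(L₃ξ+L₂)·((L₁+L₃)ξ+L₂)) − G₁/(ln2·(G₂κ²+G₃ξκ))`
and `κ = 1−ξ+ρ'`, under the stated positivity assumptions, `F'(ξ) = 0` iff
`A·ξ² + B·ξ + C = 0`; consequently, if `A ≠ 0`, `B² − 4AC ≥ 0` and
`ξ* = (−B − √(B²−4AC))/(2A)` lies in `(0,1)`, then `F'(ξ*) = 0`. -/
theorem stmt_6 (ρ ρ' : ℝ) (hρ : ρ ∈ Set.Ico (0 : ℝ) 1) (hρ'def : ρ' = ρ / (1 - ρ))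
    (L₁ L₂ L₃ G₁ G₂ G₃ A B C : ℝ)
    (hL₁ : 0 < L₁) (hL₂ : 0 < L₂) (hL₃ : 0 < L₃)
    (hG₁ : 0 < G₁) (hG₂ : 0 < G₂) (hG₃ : 0 < G₃)
    (hA : A = L₁ * L₂ * G₂ - L₁ * L₂ * G₃ - G₁ * L₃ * (L₁ + L₃))
    (hB : B = (1 + ρ') * L₁ * L₂ * (G₃ - 2 * G₂) - G₁ * L₂ * (L₁ + 2 * L₃))
    (hC : C = G₂ * L₁ * L₂ * (1 + ρ') ^ 2 - G₁ * L₂ ^ 2)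
    (F' : ℝ → ℝ)
    (hF' : ∀ x : ℝ, F' x =
      L₁ * L₂ / (Real.log 2 * (L₃ * x + L₂) * ((L₁ + L₃) * x + L₂)) -
        G₁ / (Real.log 2 * (G₂ * (1 - x + ρ') ^ 2 + G₃ * x * (1 - x + ρ'))))
    (ξ : ℝ) (hξ : ξ ∈ Set.Ioo (0 : ℝ) 1) (hκ : 0 < 1 - ξ + ρ') :
    (F' ξ = 0 ↔ A * ξ ^ 2 + B * ξ + C = 0) ∧
    ∀ ξs : ℝ, A ≠ 0 → 0 ≤ B ^ 2 - 4 * A * C →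
      ξs = (-B - Real.sqrt (B ^ 2 - 4 * A * C)) / (2 * A) →
      ξs ∈ Set.Ioo (0 : ℝ) 1 → F' ξs = 0 := by
  have hρ'nn : 0 ≤ ρ' := by
    rw [hρ'def]
    exact div_nonneg hρ.1 (by linarith [hρ.2])
  have hlog : 0 < Real.log 2 := Real.log_pos (by norm_num)
  have key : ∀ x : ℝ, x ∈ Set.Ioo (0 : ℝ) 1 → 0 < 1 - x + ρ' →
      (F' x = 0 ↔ A * x ^ 2 + B * x + C = 0) := by
    intro x hx hk
    have hp1 : 0 < L₃ * x + L₂ := by nlinarith [hx.1]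
    have hp2 : 0 < (L₁ + L₃) * x + L₂ := by nlinarith [hx.1]
    have hp3 : 0 < G₂ * (1 - x + ρ') ^ 2 + G₃ * x * (1 - x + ρ') := by
      have := mul_pos hG₂ (pow_pos hk 2)
      have := mul_pos (mul_pos hG₃ hx.1) hk
      linarith
    have h1 : Real.log 2 * (L₃ * x + L₂) * ((L₁ + L₃) * x + L₂) ≠ 0 :=
      (mul_pos (mul_pos hlog hp1) hp2).ne'
    have h2 : Real.log 2 * (G₂ * (1 - x + ρ') ^ 2 + G₃ * x * (1 - x + ρ')) ≠ 0 :=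
      (mul_pos hlog hp3).ne'
    rw [hF', sub_eq_zero, div_eq_div_iff h1 h2]
    constructor
    · intro h
      have h3 : Real.log 2 * (A * x ^ 2 + B * x + C) = 0 := by
        subst hA hB hC; linear_combination h
      exact (mul_eq_zero.mp h3).resolve_left hlog.ne'
    · intro h
      subst hA hB hC
      linear_combination Real.log 2 * h
  refine ⟨key ξ hξ hκ, ?_⟩
  intro ξs hAne hdisc hxs hmem
  have hk : 0 < 1 - ξs + ρ' := by linarith [hmem.2]
  have hquad : A * ξs ^ 2 + B * ξs + C = 0 := by
    have := (quadratic_eq_zero_iff hAne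
      (by rw [discrim]; exact (Real.mul_self_sqrt hdisc).symm) ξs).mpr (Or.inr hxs)
    linarith [this, sq ξs ▸ this]
  exact (key ξs hmem hk).mpr hquad
end

section
/- Fix N, K, ρ ∈ [0,1), ξ ∈ (0,1], γ₀ > 0, T > 0 and β_1,…,β_K > 0, and regard the eavesdropper-rate upper bound C̄ as a function of the antenna ratio a ∈ (0,1) via M = a·N, with b = K/N, φ = 1−b, κ = 1−ξ+ρ', ϖ(a) = a·b·(1−ξ)². On the interval of a where the denominator φ·κ²·(N/T − a) − ϖ(a) > 0, the map a ↦ C̄(a) is strictly increasing, and consequently the secrecy-rate lower bound a ↦ R_sec(a) = max(R_k − C̄(a), 0) is nonincreasing in a (R_k does not depend on a). -/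
/-!
`C̄(a) = log₂ (1 + c·a / D(a))` with `c = φ N ξ κ β_k / S > 0` and `D(a) = φκ²(N/T − a) − a b (1 − ξ)²`
affine of slope `−(φκ² + b(1 − ξ)²) ≤ 0`. Where `D > 0`, the quotient of an increasing
nonnegative numerator by a decreasing positive denominator increases strictly, and so does `C̄`;
subtracting it from the constant `R_k` and truncating at `0` gives a nonincreasing function.
-/

open Real

theorem StrictMonoOn.div_of_antitoneOn {α : Type*} [Preorder α] {s : Set α} {f g : α → ℝ}
    (hf : StrictMonoOn f s) (hg : AntitoneOn g s) (hf0 : ∀ x ∈ s, 0 ≤ f x)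
    (hg0 : ∀ x ∈ s, 0 < g x) : StrictMonoOn (fun x => f x / g x) s :=
  fun _ hx y hy hxy => div_lt_div₀ (hf hx hy hxy) (hg hx hy hxy.le) (hf0 y hy) (hg0 y hy)

theorem StrictMonoOn.logb_one_add {α : Type*} [Preorder α] {s : Set α} {f : α → ℝ} {b : ℝ}
    (hb : 1 < b) (hf : StrictMonoOn f s) (hf0 : ∀ x ∈ s, 0 ≤ f x) :
    StrictMonoOn (fun x => logb b (1 + f x)) s :=
  (strictMonoOn_logb hb).comp (hf.const_add 1) fun x hx => by
    show 0 < 1 + f x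
    linarith [hf0 x hx]

theorem MonotoneOn.antitoneOn_max_const_sub_zero {α : Type*} [Preorder α] {s : Set α}
    {f : α → ℝ} (hf : MonotoneOn f s) (c : ℝ) : AntitoneOn (fun x => max (c - f x) 0) s :=
  AntitoneOn.max (fun _ hx _ hy hxy => sub_le_sub_left (hf hx hy hxy) c) antitoneOn_const

theorem antitone_mul_sub_sub_mul_mul {p c b e : ℝ} (hp : 0 ≤ p) (hb : 0 ≤ b) (he : 0 ≤ e) :
    Antitone fun a : ℝ => p * (c - a) - a * b * e := fun x y hxy => by
  nlinarith [mul_nonneg hp (sub_nonneg.2 hxy), mul_nonneg (mul_nonneg (sub_nonneg.2 hxy) hb) he]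

theorem stmt_7_general (K : ℕ) (β : Fin K → ℝ) (hβ : ∀ i, 0 < β i) (k : Fin K)
    (N T ρ ξ : ℝ) (hKN : (K : ℝ) < N)
    (hρ : ρ ∈ Set.Ico (0 : ℝ) 1) (hξ : ξ ∈ Set.Ioc (0 : ℝ) 1)
    (S b φ ρ' κ : ℝ) (hS : S = ∑ i, β i) (hb : b = K / N) (hφ : φ = 1 - b)
    (hρ' : ρ' = ρ / (1 - ρ)) (hκ : κ = 1 - ξ + ρ')
    (Rk : ℝ)
    (Cbar : ℝ → ℝ)
    (hCbar : ∀ a : ℝ, Cbar a = Real.logb 2 (1 +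
      (φ * (a * N) * ξ * κ * (β k) / S) /
        (φ * κ ^ 2 * (N / T - a) - a * b * (1 - ξ) ^ 2)))
    (goodSet : Set ℝ)
    (hgood : goodSet = {a : ℝ | a ∈ Set.Ioo (0 : ℝ) 1 ∧
      0 < φ * κ ^ 2 * (N / T - a) - a * b * (1 - ξ) ^ 2}) :
    StrictMonoOn Cbar goodSet ∧
    AntitoneOn (fun a => max (Rk - Cbar a) 0) goodSet := by
  obtain ⟨hξ0, hξ1⟩ := hξ
  have hN : 0 < N := (Nat.cast_nonneg K).trans_lt hKN
  have hS0 : 0 < S := hS ▸ Finset.sum_pos (fun i _ => hβ i) ⟨k, Finset.mem_univ k⟩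
  have hβk := hβ k
  have hb0 : 0 ≤ b := hb ▸ by positivity
  have hφ0 : 0 < φ := by rwa [hφ, hb, sub_pos, div_lt_one hN]
  have hκ0 : 0 ≤ κ := by
    have : 0 ≤ ρ' := hρ' ▸ div_nonneg hρ.1 (sub_nonneg.2 hρ.2.le)
    linarith
  have hmem : ∀ a ∈ goodSet, 0 < a ∧ 0 < φ * κ ^ 2 * (N / T - a) - a * b * (1 - ξ) ^ 2 :=
    fun a ha => by rw [hgood] at ha; exact ⟨ha.1.1, ha.2⟩
  -- if `κ = 0` then `ξ = 1`, and the denominator vanishes identically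
  have hκ : ∀ a ∈ goodSet, 0 < κ := fun a ha => by
    obtain ⟨ha0, hD⟩ := hmem a ha
    refine hκ0.lt_of_ne fun h => ?_
    rw [← h] at hD
    nlinarith [mul_nonneg (mul_nonneg ha0.le hb0) (sq_nonneg (1 - ξ))]
  have hnum : StrictMonoOn (fun a => φ * (a * N) * ξ * κ * β k / S) goodSet :=
    fun x hx y _ hxy => by have := hκ x hx; dsimp only; gcongr
  have hnum0 : ∀ a ∈ goodSet, 0 ≤ φ * (a * N) * ξ * κ * β k / S :=
    fun a ha => by have := (hmem a ha).1; positivity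
  have hden := (antitone_mul_sub_sub_mul_mul (c := N / T) (by positivity : 0 ≤ φ * κ ^ 2) hb0
    (sq_nonneg (1 - ξ))).antitoneOn goodSet
  have hmono : StrictMonoOn Cbar goodSet := by
    rw [show Cbar = _ from funext hCbar]
    exact (hnum.div_of_antitoneOn hden hnum0 fun a ha => (hmem a ha).2).logb_one_add one_lt_two
      fun a ha => div_nonneg (hnum0 a ha) (hmem a ha).2.le
  exact ⟨hmono, hmono.monotoneOn.antitoneOn_max_const_sub_zero Rk⟩

/-- regarding the eavesdropper-rate upper bound `C̄` as a function of the
antenna ratio `a ∈ (0,1)` via `M = a·N`, on the interval of `a` where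
`φ·κ²·(N/T − a) − ϖ(a) > 0`, the map `a ↦ C̄(a)` is strictly increasing, and the
secrecy-rate lower bound `a ↦ max (R_k − C̄(a)) 0` is nonincreasing in `a`. -/
theorem stmt_7 (K : ℕ) (hK : 0 < K) (β : Fin K → ℝ) (hβ : ∀ i, 0 < β i) (k : Fin K)
    (N T γ₀ ρ ξ : ℝ) (hN : 0 < N) (hKN : (K : ℝ) < N) (hT : 0 < T) (hγ₀ : 0 < γ₀)
    (hρ : ρ ∈ Set.Ico (0 : ℝ) 1) (hξ : ξ ∈ Set.Ioc (0 : ℝ) 1)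
    (S b φ ρ' κ : ℝ) (hS : S = ∑ i, β i) (hb : b = K / N) (hφ : φ = 1 - b)
    (hρ' : ρ' = ρ / (1 - ρ)) (hκ : κ = 1 - ξ + ρ')
    (Rk : ℝ)
    (hRk : Rk = Real.logb 2 (1 +
      ((1 - ρ) * (β k) ^ 2 * γ₀ * ξ * N / S) /
        ((1 - ρ) * ξ * γ₀ * (β k) * T * (∑ j ∈ Finset.univ.erase k, β j) / (N * S)
          + ρ * (β k) * γ₀ + 1)))
    (Cbar : ℝ → ℝ)
    (hCbar : ∀ a : ℝ, Cbar a = Real.logb 2 (1 +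
      (φ * (a * N) * ξ * κ * (β k) / S) /
        (φ * κ ^ 2 * (N / T - a) - a * b * (1 - ξ) ^ 2)))
    (goodSet : Set ℝ)
    (hgood : goodSet = {a : ℝ | a ∈ Set.Ioo (0 : ℝ) 1 ∧
      0 < φ * κ ^ 2 * (N / T - a) - a * b * (1 - ξ) ^ 2}) :
    StrictMonoOn Cbar goodSet ∧
    AntitoneOn (fun a => max (Rk - Cbar a) 0) goodSet :=
  stmt_7_general K β hβ k N T ρ ξ hKN hρ hξ S b φ ρ' κ hS hb hφ hρ' hκ Rk Cbar hCbar goodSet hgood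
end

section
/- Assume β_k = β > 0 for all k (so S = K·β), fix N, K, ρ ∈ [0,1), γ₀ > 0, T > 0, set b = K/N, φ = 1−b, ρ' = ρ/(1−ρ), and let g(a) = (1/ln2)·[ (1−ρ)·β·γ₀·N/(K·(ρ·β·γ₀+1)) − (φ·a·N·(1+ρ')/K) / ( φ·(1+ρ')²·(N/T − a) − a·b ) ] denote the derivative at ξ = 0 of the secrecy-rate lower bound R_k(ξ) − C̄(ξ) with respect to ξ. Let a₀ = φ·(1+ρ')²·N / ( T·(φ·(1+ρ')² + b) ) > 0 be the point where the denominator φ·(1+ρ')²·(N/T − a) − a·b vanishes. Then g is continuous and strictly decreasing on (0, a₀), g(a) > 0 for a near 0, and g(a) → −∞ as a → a₀⁻; hence there exists a unique a_sec ∈ (0, a₀) with g(a_sec) = 0, and the leading-order secrecy rate is positive (g(a) > 0) if and only if a < a_sec. -/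
/-- with equal large-scale fading `β_k = β` (so `S = K·β`), the ξ-derivative
at `ξ = 0` of the secrecy-rate lower bound,
`g(a) = (1/ln2)·[(1−ρ)βγ₀N/(K(ρβγ₀+1)) − (φaN(1+ρ')/K)/(φ(1+ρ')²(N/T−a) − ab)]`,
is continuous and strictly decreasing on `(0, a₀)` (where `a₀ > 0` is the zero of the
denominator), positive near `0`, and tends to `−∞` as `a → a₀⁻`; hence there is a unique
`a_sec ∈ (0, a₀)` with `g(a_sec) = 0`, and `g(a) > 0` iff `a < a_sec`. -/
theorem stmt_8 (N K T γ₀ β ρ : ℝ) (hN : 0 < N) (hK : 0 < K) (hKN : K < N)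
    (hT : 0 < T) (hγ₀ : 0 < γ₀) (hβ : 0 < β) (hρ : ρ ∈ Set.Ico (0 : ℝ) 1)
    (b φ ρ' a₀ : ℝ) (hb : b = K / N) (hφ : φ = 1 - b) (hρ' : ρ' = ρ / (1 - ρ))
    (ha₀ : a₀ = φ * (1 + ρ') ^ 2 * N / (T * (φ * (1 + ρ') ^ 2 + b)))
    (g : ℝ → ℝ)
    (hg : ∀ a : ℝ, g a = (1 / Real.log 2) *
      ((1 - ρ) * β * γ₀ * N / (K * (ρ * β * γ₀ + 1)) -
        (φ * a * N * (1 + ρ') / K) / (φ * (1 + ρ') ^ 2 * (N / T - a) - a * b))) :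
    0 < a₀ ∧
    ContinuousOn g (Set.Ioo 0 a₀) ∧
    StrictAntiOn g (Set.Ioo 0 a₀) ∧
    (∃ ε > 0, ∀ a ∈ Set.Ioo 0 ε, 0 < g a) ∧
    Filter.Tendsto g (nhdsWithin a₀ (Set.Iio a₀)) Filter.atBot ∧
    ∃ asec ∈ Set.Ioo 0 a₀, g asec = 0 ∧
      (∀ a' ∈ Set.Ioo 0 a₀, g a' = 0 → a' = asec) ∧
      (∀ a ∈ Set.Ioo 0 a₀, (0 < g a ↔ a < asec)) := by
  have hρ0 : 0 ≤ ρ := hρ.1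
  have hρ1 : 0 < 1 - ρ := by linarith [hρ.2]
  have hρ'0 : 0 ≤ ρ' := by rw [hρ']; positivity
  have h1ρ' : 0 < 1 + ρ' := by linarith
  have hb0 : 0 < b := by rw [hb]; positivity
  have hb1 : b < 1 := by rw [hb, div_lt_one hN]; exact hKN
  have hφ0 : 0 < φ := by rw [hφ]; linarith
  set Q : ℝ := φ * (1 + ρ') ^ 2 + b with hQdef
  have hQ : 0 < Q := by positivity
  have ha₀pos : 0 < a₀ := by rw [ha₀]; positivity
  have key : ∀ a : ℝ, φ * (1 + ρ') ^ 2 * (N / T - a) - a * b = Q * (a₀ - a) := by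
    intro a
    rw [ha₀, hQdef]
    have h1 : T ≠ 0 := hT.ne'
    have h2 : φ * (1 + ρ') ^ 2 + b ≠ 0 := by positivity
    field_simp
    ring
  set C₁ : ℝ := (1 - ρ) * β * γ₀ * N / (K * (ρ * β * γ₀ + 1)) with hC₁def
  have hργ : 0 < ρ * β * γ₀ + 1 := by
    have := mul_nonneg (mul_nonneg hρ0 hβ.le) hγ₀.le
    linarith
  have hC₁ : 0 < C₁ := by
    rw [hC₁def]
    exact div_pos (by positivity) (mul_pos hK hργ)
  set m : ℝ := φ * N * (1 + ρ') / K with hmdef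
  have hm : 0 < m := by positivity
  set L : ℝ := 1 / Real.log 2 with hLdef
  have hlog : 0 < Real.log 2 := Real.log_pos (by norm_num)
  have hL : 0 < L := by positivity
  have hg' : ∀ a : ℝ, g a = L * (C₁ - m * a / (Q * (a₀ - a))) := by
    intro a
    rw [hg a, key a, hmdef]
    ring
  clear_value Q C₁ m L
  clear hg hb hφ hρ' ha₀ key hC₁def hmdef hLdef hQdef
  -- the explicit root
  set asec : ℝ := C₁ * Q * a₀ / (m + C₁ * Q) with hasecdef
  have hmq : 0 < m + C₁ * Q := by positivity
  have hasec0 : 0 < asec := by positivity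
  have hasec1 : asec < a₀ := by
    rw [hasecdef, div_lt_iff₀ hmq]
    nlinarith [mul_pos hm ha₀pos]
  -- the main characterization
  have hiff : ∀ a ∈ Set.Ioo (0:ℝ) a₀, (0 < g a ↔ a < asec) := by
    intro a ha
    have hd : 0 < Q * (a₀ - a) := mul_pos hQ (by linarith [ha.2])
    rw [hg' a]
    rw [mul_pos_iff_of_pos_left hL, sub_pos, div_lt_iff₀ hd, hasecdef, lt_div_iff₀ hmq]
    constructor <;> intro h <;> nlinarith [h]
  have heq : ∀ a ∈ Set.Ioo (0:ℝ) a₀, (g a = 0 ↔ a = asec) := by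
    intro a ha
    have hd : 0 < Q * (a₀ - a) := mul_pos hQ (by linarith [ha.2])
    rw [hg' a, mul_eq_zero]
    constructor
    · rintro (h | h)
      · exact absurd h hL.ne'
      · have h2 : m * a / (Q * (a₀ - a)) = C₁ := by linarith
        rw [div_eq_iff hd.ne'] at h2
        rw [hasecdef, eq_div_iff hmq.ne']
        linear_combination h2
    · intro h
      right
      have h2 : a * (m + C₁ * Q) = C₁ * Q * a₀ := by
        rw [h, hasecdef, div_mul_cancel₀ _ hmq.ne']
      have h3 : m * a = C₁ * (Q * (a₀ - a)) := by linear_combination h2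
      rw [h3, mul_div_assoc, div_self hd.ne', mul_one, sub_self]
  have hgasec : g asec = 0 := (heq asec ⟨hasec0, hasec1⟩).mpr rfl
  -- strict antitonicity
  have hanti : StrictAntiOn g (Set.Ioo 0 a₀) := by
    intro x hx y hy hxy
    have hdx : 0 < Q * (a₀ - x) := mul_pos hQ (by linarith [hx.2])
    have hdy : 0 < Q * (a₀ - y) := mul_pos hQ (by linarith [hy.2])
    rw [hg' x, hg' y]
    have hlt : m * x / (Q * (a₀ - x)) < m * y / (Q * (a₀ - y)) := by
      rw [div_lt_div_iff₀ hdx hdy]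
      nlinarith [mul_pos (mul_pos hm hQ) (mul_pos ha₀pos (sub_pos.mpr hxy))]
    exact mul_lt_mul_of_pos_left (sub_lt_sub_left hlt C₁) hL
  -- continuity
  have hfun : g = fun a => L * (C₁ - m * a / (Q * (a₀ - a))) := funext hg'
  have hcont : ContinuousOn g (Set.Ioo 0 a₀) := by
    rw [hfun]
    apply ContinuousOn.mul continuousOn_const
    apply ContinuousOn.sub continuousOn_const
    apply ContinuousOn.div (by fun_prop) (by fun_prop)
    intro x hx
    exact (mul_pos hQ (by linarith [hx.2])).ne'
  -- tendsto atBot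
  have htend : Filter.Tendsto g (nhdsWithin a₀ (Set.Iio a₀)) Filter.atBot := by
    rw [hfun]
    have h1 : Filter.Tendsto (fun a : ℝ => Q * (a₀ - a)) (nhdsWithin a₀ (Set.Iio a₀))
        (nhdsWithin 0 (Set.Ioi 0)) := by
      apply tendsto_nhdsWithin_of_tendsto_nhds_of_eventually_within
      · have h0 : Filter.Tendsto (fun a : ℝ => Q * (a₀ - a)) (nhds a₀) (nhds (Q * (a₀ - a₀))) :=
          (continuous_const.mul (continuous_const.sub continuous_id)).tendsto a₀
        simpa using h0.mono_left nhdsWithin_le_nhds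
      · filter_upwards [eventually_mem_nhdsWithin] with a ha
        exact mul_pos hQ (sub_pos.mpr (Set.mem_Iio.mp ha))
    have h2 : Filter.Tendsto (fun a : ℝ => (Q * (a₀ - a))⁻¹) (nhdsWithin a₀ (Set.Iio a₀))
        Filter.atTop := tendsto_inv_nhdsGT_zero.comp h1
    have h3 : Filter.Tendsto (fun a : ℝ => m * a) (nhdsWithin a₀ (Set.Iio a₀))
        (nhds (m * a₀)) := by
      exact ((continuous_const.mul continuous_id).tendsto a₀).mono_left nhdsWithin_le_nhds
    have h4 : Filter.Tendsto (fun a : ℝ => m * a * (Q * (a₀ - a))⁻¹)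
        (nhdsWithin a₀ (Set.Iio a₀)) Filter.atTop :=
      h3.pos_mul_atTop (mul_pos hm ha₀pos) h2
    have h5 : Filter.Tendsto (fun a : ℝ => L * (m * a * (Q * (a₀ - a))⁻¹))
        (nhdsWithin a₀ (Set.Iio a₀)) Filter.atTop := h4.const_mul_atTop hL
    have h6 : Filter.Tendsto (fun a : ℝ => -(L * (m * a * (Q * (a₀ - a))⁻¹)))
        (nhdsWithin a₀ (Set.Iio a₀)) Filter.atBot :=
      Filter.tendsto_neg_atTop_atBot.comp h5
    have h7 := Filter.tendsto_atBot_add_const_left (nhdsWithin a₀ (Set.Iio a₀)) (L * C₁) h6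
    apply h7.congr
    intro a
    rw [div_eq_mul_inv]
    ring
  refine ⟨ha₀pos, hcont, hanti, ⟨asec, hasec0, ?_⟩, htend,
    asec, ⟨hasec0, hasec1⟩, hgasec, ?_, hiff⟩
  · intro a ha
    exact (hiff a ⟨ha.1, lt_trans ha.2 hasec1⟩).mpr ha.2
  · intro a' ha' h0
    exact (heq a' ha').mp h0
end

section
/- Define a_sec(ρ) = (1−b)·N·γ₀ / ( T·[ γ₀·ρ·b·(ρ − β − 2) + γ₀·(1 + β·ρ) + 1 − b ] ) with fixed N > 0, T > 0, b ∈ (0,1), γ₀ > 0, β > 0. Assume β·(1−b) > 2·b and that the bracketed quantity is positive for all ρ ∈ [0,1). Then a_sec is strictly decreasing in ρ on [0,1): higher DAC distortion reduces the maximum number of eavesdropper antennas that can be tolerated for secure transmission. -/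
/-- `a_sec(ρ) = (1−b)Nγ₀ / (T·[γ₀ρb(ρ−β−2) + γ₀(1+βρ) + 1−b])` is strictly
decreasing in `ρ` on `[0,1)`, assuming `β(1−b) > 2b` and that the bracketed quantity is
positive for all `ρ ∈ [0,1)`: higher DAC distortion reduces the maximum number of
eavesdropper antennas that can be tolerated for secure transmission. -/
theorem stmt_10 (N T b γ₀ β : ℝ) (hN : 0 < N) (hT : 0 < T) (hb : b ∈ Set.Ioo (0 : ℝ) 1)
    (hγ₀ : 0 < γ₀) (hβ : 0 < β)
    (hβb : β * (1 - b) > 2 * b)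
    (hbracket : ∀ ρ ∈ Set.Ico (0 : ℝ) 1,
      0 < γ₀ * ρ * b * (ρ - β - 2) + γ₀ * (1 + β * ρ) + 1 - b)
    (asec : ℝ → ℝ)
    (hasec : ∀ ρ : ℝ, asec ρ = (1 - b) * N * γ₀ /
      (T * (γ₀ * ρ * b * (ρ - β - 2) + γ₀ * (1 + β * ρ) + 1 - b))) :
    StrictAntiOn asec (Set.Ico (0 : ℝ) 1) := by
  intro x hx y hy hxy
  rw [hasec, hasec]
  obtain ⟨hb0, hb1⟩ := hb
  have hgx := hbracket x hx
  have hgy := hbracket y hy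
  have h1b : 0 < 1 - b := by linarith
  have hC : 0 < (1 - b) * N * γ₀ := by positivity
  have hkey : γ₀ * x * b * (x - β - 2) + γ₀ * (1 + β * x) + 1 - b
      < γ₀ * y * b * (y - β - 2) + γ₀ * (1 + β * y) + 1 - b := by
    have hdiff : (γ₀ * y * b * (y - β - 2) + γ₀ * (1 + β * y) + 1 - b)
        - (γ₀ * x * b * (x - β - 2) + γ₀ * (1 + β * x) + 1 - b)
        = γ₀ * (y - x) * (β * (1 - b) - b * (2 - x - y)) := by ring
    have h1 : b * (2 - x - y) ≤ 2 * b := by nlinarith [hx.1, hy.1]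
    nlinarith [mul_pos (mul_pos hγ₀ (sub_pos.mpr hxy)) (show 0 < β * (1 - b) - b * (2 - x - y) by linarith)]
  apply div_lt_div_of_pos_left hC (by positivity)
  exact (mul_lt_mul_iff_right₀ hT).mpr hkey
end

section
/- Fix k, let ζ̃ ≥ 1 and set T = N·ζ̃ in the user-rate lower bound R_k(ρ) = log₂(1 + ((1−ρ)·β_k²·γ₀·ξ·N/S) / ((1−ρ)·ξ·γ₀·β_k·ζ̃·(∑_{j≠k} β_j)/S + ρ·β_k·γ₀ + 1)). Then for every ρ ∈ [0,1), R_k is differentiable in ρ and ∂R_k/∂ρ = − β_k²·γ₀·ξ·N·(1 + β_k·γ₀)·S / ( ln2 · (Υ·β_k·γ₀ + S) · (Ψ·β_k·γ₀ + S) ), where Υ = (1−ρ)·(N·β_k + ζ̃·∑_{j≠k} β_j)·ξ + ρ·S and Ψ = ρ·S + (1−ρ)·ξ·ζ̃·∑_{j≠k} β_j. -/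
/-!
The rate is `log₂ (1 + a ρ / b ρ)` with `a` and `b` affine in `ρ`, so its derivative is
`(a' b - a b') / (ln 2 · b · (a + b))`. For `a = (1 - ρ) p` and `b = (1 - ρ) q + ρ e + 1` the
numerator `a' b - a b' = -p (1 + e)` does not depend on `ρ`, and clearing the `1 / S` in `p`, `q`
turns `b` and `a + b` into `(Ψ β_k γ₀ + S) / S` and `(Υ β_k γ₀ + S) / S`.
-/

open Real

theorem hasDerivAt_logb_one_add_div {f g : ℝ → ℝ} {f' g' x : ℝ} (b : ℝ)
    (hf : HasDerivAt f f' x) (hg : HasDerivAt g g' x) (hgx : g x ≠ 0) (hfg : g x + f x ≠ 0) :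
    HasDerivAt (fun y => logb b (1 + f y / g y))
      ((f' * g x - f x * g') / (log b * (g x * (g x + f x)))) x := by
  have hne : 1 + f x / g x ≠ 0 := by
    rw [one_add_div hgx]; exact div_ne_zero hfg hgx
  refine (((HasDerivAt.const_add 1 (hf.div hg hgx)).log hne).div_const (log b)).congr_deriv ?_
  rw [mul_comm (log b), ← div_div, Pi.div_apply]
  congr 1
  field_simp

theorem hasDerivAt_logb_one_add_affine_div (p q e x : ℝ)
    (hden : (1 - x) * q + x * e + 1 ≠ 0)
    (hsum : (1 - x) * q + x * e + 1 + (1 - x) * p ≠ 0) :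
    HasDerivAt (fun y => logb 2 (1 + (1 - y) * p / ((1 - y) * q + y * e + 1)))
      (-(p * (1 + e)) /
        (log 2 * (((1 - x) * q + x * e + 1) * ((1 - x) * q + x * e + 1 + (1 - x) * p)))) x := by
  have hsub : HasDerivAt (fun y : ℝ => 1 - y) (-1) x := (hasDerivAt_id x).const_sub 1
  have hnum : HasDerivAt (fun y => (1 - y) * p) (-1 * p) x := hsub.mul_const p
  have hden' : HasDerivAt (fun y => (1 - y) * q + y * e + 1) (-1 * q + 1 * e) x :=
    ((hsub.mul_const q).add ((hasDerivAt_id' x).mul_const e)).add_const 1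
  convert hasDerivAt_logb_one_add_div 2 hnum hden' hden hsum using 2
  ring

theorem stmt_12_general (K : ℕ) (β : Fin K → ℝ) (hβ : ∀ i, 0 < β i) (k : Fin K)
    (N γ₀ ξ ζt : ℝ) (hN : 0 < N) (hγ₀ : 0 < γ₀) (hξ : ξ ∈ Set.Ioc (0 : ℝ) 1)
    (hζt : 1 ≤ ζt)
    (S Sj : ℝ) (hS : S = ∑ i, β i) (hSj : Sj = ∑ j ∈ Finset.univ.erase k, β j)
    (Rk : ℝ → ℝ)
    (hRk : ∀ ρ : ℝ, Rk ρ = Real.logb 2 (1 +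
      ((1 - ρ) * (β k) ^ 2 * γ₀ * ξ * N / S) /
        ((1 - ρ) * ξ * γ₀ * (β k) * ζt * Sj / S + ρ * (β k) * γ₀ + 1))) :
    ∀ ρ ∈ Set.Ico (0 : ℝ) 1,
      HasDerivAt Rk
        (-((β k) ^ 2 * γ₀ * ξ * N * (1 + (β k) * γ₀) * S /
          (Real.log 2 *
            (((1 - ρ) * (N * (β k) + ζt * Sj) * ξ + ρ * S) * (β k) * γ₀ + S) *
            ((ρ * S + (1 - ρ) * ξ * ζt * Sj) * (β k) * γ₀ + S)))) ρ := by
  rintro ρ ⟨hρ0, hρ1⟩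
  have hβk := hβ k
  have hS0 : 0 < S := hS ▸ Finset.sum_pos (fun i _ => hβ i) ⟨k, Finset.mem_univ k⟩
  have hSj0 : 0 ≤ Sj := hSj ▸ Finset.sum_nonneg fun j _ => (hβ j).le
  have hξ0 := hξ.1
  have hρ : 0 < 1 - ρ := by linarith
  obtain ⟨p, hp⟩ : ∃ p, p = β k ^ 2 * γ₀ * ξ * N / S := ⟨_, rfl⟩
  obtain ⟨q, hq⟩ : ∃ q, q = ξ * γ₀ * β k * ζt * Sj / S := ⟨_, rfl⟩
  have hRk' : Rk = fun y => logb 2 (1 + (1 - y) * p / ((1 - y) * q + y * (β k * γ₀) + 1)) := by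
    funext y
    rw [hRk, hp, hq]
    ring_nf
  have hden : 0 < (1 - ρ) * q + ρ * (β k * γ₀) + 1 := by rw [hq]; positivity
  have hsum : 0 < (1 - ρ) * q + ρ * (β k * γ₀) + 1 + (1 - ρ) * p := by rw [hp]; positivity
  rw [hRk']
  convert hasDerivAt_logb_one_add_affine_div p q (β k * γ₀) ρ hden.ne' hsum.ne' using 1
  subst hp hq
  field_simp
  ring

/-- with `T = N·ζ̃`, the user-rate lower bound
`R_k(ρ) = log₂(1 + ((1−ρ)β_k²γ₀ξN/S)/((1−ρ)ξγ₀β_kζ̃Sj/S + ρβ_kγ₀ + 1))` is differentiable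
in the DAC distortion `ρ` on `[0,1)` with derivative
`−β_k²γ₀ξN(1+β_kγ₀)S / (ln2·(Υβ_kγ₀+S)·(Ψβ_kγ₀+S))` where
`Υ = (1−ρ)(Nβ_k + ζ̃Sj)ξ + ρS` and `Ψ = ρS + (1−ρ)ξζ̃Sj`. -/
theorem stmt_12 (K : ℕ) (hK : 0 < K) (β : Fin K → ℝ) (hβ : ∀ i, 0 < β i) (k : Fin K)
    (N γ₀ ξ ζt : ℝ) (hN : 0 < N) (hγ₀ : 0 < γ₀) (hξ : ξ ∈ Set.Ioc (0 : ℝ) 1)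
    (hζt : 1 ≤ ζt)
    (S Sj : ℝ) (hS : S = ∑ i, β i) (hSj : Sj = ∑ j ∈ Finset.univ.erase k, β j)
    (Rk : ℝ → ℝ)
    (hRk : ∀ ρ : ℝ, Rk ρ = Real.logb 2 (1 +
      ((1 - ρ) * (β k) ^ 2 * γ₀ * ξ * N / S) /
        ((1 - ρ) * ξ * γ₀ * (β k) * ζt * Sj / S + ρ * (β k) * γ₀ + 1))) :
    ∀ ρ ∈ Set.Ico (0 : ℝ) 1,
      HasDerivAt Rk
        (-((β k) ^ 2 * γ₀ * ξ * N * (1 + (β k) * γ₀) * S /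
          (Real.log 2 *
            (((1 - ρ) * (N * (β k) + ζt * Sj) * ξ + ρ * S) * (β k) * γ₀ + S) *
            ((ρ * S + (1 - ρ) * ξ * ζt * Sj) * (β k) * γ₀ + S)))) ρ :=
  stmt_12_general K β hβ k N γ₀ ξ ζt hN hγ₀ hξ hζt S Sj hS hSj Rk hRk
end

section
/- Fix ρ ∈ [0,1), ξ ∈ (0,1], γ₀ > 0, N > 0, β_1,…,β_K > 0 with K ≥ 2, S = ∑_i β_i and Σ' = ∑_{j≠k} β_j > 0. Define E(ζ̃) = − β_k²·γ₀·ξ·N·(1 + β_k·γ₀)·S / ( ln2 · (Υ(ζ̃)·β_k·γ₀ + S) · (Ψ(ζ̃)·β_k·γ₀ + S) ), where Υ(ζ̃) = (1−ρ)·(N·β_k + ζ̃·Σ')·ξ + ρ·S and Ψ(ζ̃) = ρ·S + (1−ρ)·ξ·ζ̃·Σ'. Then E(ζ̃) < 0 for all ζ̃ ≥ 1, and E is strictly increasing in ζ̃ on [1, ∞). -/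
/-- the derivative `E(ζ̃) = ∂R_k/∂ρ`, viewed as a function of the spatial
correlation level `ζ̃`, is negative for all `ζ̃ ≥ 1` and strictly increasing on `[1,∞)`. -/
theorem stmt_13 (K : ℕ) (hK : 2 ≤ K) (β : Fin K → ℝ) (hβ : ∀ i, 0 < β i) (k : Fin K)
    (N γ₀ ξ ρ : ℝ) (hN : 0 < N) (hγ₀ : 0 < γ₀) (hξ : ξ ∈ Set.Ioc (0 : ℝ) 1)
    (hρ : ρ ∈ Set.Ico (0 : ℝ) 1)
    (S Sj : ℝ) (hS : S = ∑ i, β i) (hSj : Sj = ∑ j ∈ Finset.univ.erase k, β j)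
    (hSjpos : 0 < Sj)
    (E : ℝ → ℝ)
    (hE : ∀ ζt : ℝ, E ζt =
      -((β k) ^ 2 * γ₀ * ξ * N * (1 + (β k) * γ₀) * S /
        (Real.log 2 *
          (((1 - ρ) * (N * (β k) + ζt * Sj) * ξ + ρ * S) * (β k) * γ₀ + S) *
          ((ρ * S + (1 - ρ) * ξ * ζt * Sj) * (β k) * γ₀ + S)))) :
    (∀ ζt : ℝ, 1 ≤ ζt → E ζt < 0) ∧ StrictMonoOn E (Set.Ici (1 : ℝ)) := by
  obtain ⟨hξ0, hξ1⟩ := hξ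
  obtain ⟨hρ0, hρ1⟩ := hρ
  have hβk := hβ k
  have h1ρ : (0:ℝ) < 1 - ρ := by linarith
  have hSpos : 0 < S := by
    rw [hS]
    exact Finset.sum_pos (fun i _ => hβ i) ⟨k, Finset.mem_univ k⟩
  have hL : 0 < Real.log 2 := Real.log_pos (by norm_num)
  have h1 : 0 < 1 + β k * γ₀ := by nlinarith [mul_pos hβk hγ₀]
  have hnum : 0 < (β k) ^ 2 * γ₀ * ξ * N * (1 + (β k) * γ₀) * S :=
    mul_pos (mul_pos (mul_pos (mul_pos (mul_pos (pow_pos hβk 2) hγ₀) hξ0) hN) h1) hSpos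
  have hD1pos : ∀ ζt : ℝ, 1 ≤ ζt →
      0 < ((1 - ρ) * (N * (β k) + ζt * Sj) * ξ + ρ * S) * (β k) * γ₀ + S := by
    intro ζt hζ
    have hζ0 : 0 < ζt := lt_of_lt_of_le one_pos hζ
    have h2 : 0 < N * β k + ζt * Sj := add_pos (mul_pos hN hβk) (mul_pos hζ0 hSjpos)
    have h3 : 0 < (1 - ρ) * (N * β k + ζt * Sj) * ξ + ρ * S := by
      have := mul_pos (mul_pos h1ρ h2) hξ0
      nlinarith [mul_nonneg hρ0 hSpos.le]
    exact add_pos (mul_pos (mul_pos h3 hβk) hγ₀) hSpos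
  have hD2pos : ∀ ζt : ℝ, 1 ≤ ζt →
      0 < (ρ * S + (1 - ρ) * ξ * ζt * Sj) * (β k) * γ₀ + S := by
    intro ζt hζ
    have hζ0 : 0 < ζt := lt_of_lt_of_le one_pos hζ
    have h3 : 0 < ρ * S + (1 - ρ) * ξ * ζt * Sj := by
      have := mul_pos (mul_pos (mul_pos h1ρ hξ0) hζ0) hSjpos
      nlinarith [mul_nonneg hρ0 hSpos.le]
    exact add_pos (mul_pos (mul_pos h3 hβk) hγ₀) hSpos
  have hslope : 0 < (1 - ρ) * Sj * ξ * (β k) * γ₀ :=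
    mul_pos (mul_pos (mul_pos (mul_pos h1ρ hSjpos) hξ0) hβk) hγ₀
  constructor
  · intro ζt hζ
    rw [hE]
    exact neg_neg_of_pos (div_pos hnum
      (mul_pos (mul_pos hL (hD1pos ζt hζ)) (hD2pos ζt hζ)))
  · intro a ha b hb hab
    simp only [Set.mem_Ici] at ha hb
    rw [hE a, hE b]
    apply neg_lt_neg
    have hD1lt : ((1 - ρ) * (N * (β k) + a * Sj) * ξ + ρ * S) * (β k) * γ₀ + S
        < ((1 - ρ) * (N * (β k) + b * Sj) * ξ + ρ * S) * (β k) * γ₀ + S := by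
      nlinarith [mul_pos hslope (sub_pos.2 hab)]
    have hD2lt : (ρ * S + (1 - ρ) * ξ * a * Sj) * (β k) * γ₀ + S
        < (ρ * S + (1 - ρ) * ξ * b * Sj) * (β k) * γ₀ + S := by
      nlinarith [mul_pos hslope (sub_pos.2 hab)]
    have hden : Real.log 2 * (((1 - ρ) * (N * (β k) + a * Sj) * ξ + ρ * S) * (β k) * γ₀ + S) *
          ((ρ * S + (1 - ρ) * ξ * a * Sj) * (β k) * γ₀ + S)
        < Real.log 2 * (((1 - ρ) * (N * (β k) + b * Sj) * ξ + ρ * S) * (β k) * γ₀ + S) *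
          ((ρ * S + (1 - ρ) * ξ * b * Sj) * (β k) * γ₀ + S) :=
      mul_lt_mul (mul_lt_mul_of_pos_left hD1lt hL) hD2lt.le (hD2pos a ha)
        (mul_pos hL (hD1pos b hb)).le
    exact div_lt_div_of_pos_left hnum
      (mul_pos (mul_pos hL (hD1pos a ha)) (hD2pos a ha)) hden
end
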